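/- Let A be a real 2×2 matrix with β_1 = a_{11} − a_{21} < 0 and β_2 = a_{22} − a_{12} < 0 (an anticoordination/Hawk–Dove game), and let the constraint set be C = [0, α] with 0 < α < 1. Set x* = β_2/(β_1 + β_2) ∈ (0,1). If x* ≤ α then x* is a constrained evolutionarily stable strategy, and if x* > α then α is a constrained evolutionarily stable strategy. -/

import Mathlib

/-- Payoff of mixed strategy `x` against population state `m` in a single-population
game with 2×2 payoff matrix entries `a11 a12 a21 a22`. -/
def uA (a11 a12 a21 a22 x m : ℝ) : ℝ :=
  x * m * a11 + x * (1 - m) * a12 + (1 - x) * m * a21 + (1 - x) * (1 - m) * a22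

/-- `m'` is a constrained evolutionarily stable strategy w.r.t. constraint set `C`:
`m' ∈ C` and for every `m ∈ C` with `m ≠ m'` there is `ε̄ ∈ (0,1]` such that `m'`
strictly outperforms `m` against `ε m + (1 − ε) m'` for all `ε ∈ (0, ε̄)`. -/
def IsCESS (a11 a12 a21 a22 : ℝ) (C : Set ℝ) (m' : ℝ) : Prop :=
  m' ∈ C ∧ ∀ m ∈ C, m ≠ m' → ∃ εb ∈ Set.Ioc (0:ℝ) 1, ∀ ε ∈ Set.Ioo (0:ℝ) εb,
    uA a11 a12 a21 a22 m' (ε * m + (1 - ε) * m') >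
      uA a11 a12 a21 a22 m (ε * m + (1 - ε) * m')

/-!
The payoff advantage of `x` over `y` against a population state `p` is linear in `p` and
vanishes at the mixed equilibrium `x* = β₂ / (β₁ + β₂)`: it equals `s (x - y) (p - x*)` with
`s = β₁ + β₂ < 0`. Against a population perturbed from `x*` towards `m`, the state lies on the
side of `x*` where `m` is worse than `x*`. When `x* > α`, every admissible population state is
at most `α < x*`, where higher strategies earn more, so the largest admissible strategy `α` wins.
-/

noncomputable def mixedEquilibrium (a11 a12 a21 a22 : ℝ) : ℝ :=
  (a22 - a12) / ((a11 - a21) + (a22 - a12))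

section

variable {a11 a12 a21 a22 : ℝ}

theorem uA_sub_uA (hs : (a11 - a21) + (a22 - a12) ≠ 0) (x y p : ℝ) :
    uA a11 a12 a21 a22 x p - uA a11 a12 a21 a22 y p =
      ((a11 - a21) + (a22 - a12)) * (x - y) * (p - mixedEquilibrium a11 a12 a21 a22) := by
  unfold uA mixedEquilibrium
  field_simp
  ring

theorem mixedEquilibrium_mem_Ioo (hβ1 : a11 - a21 < 0) (hβ2 : a22 - a12 < 0) :
    mixedEquilibrium a11 a12 a21 a22 ∈ Set.Ioo 0 1 :=
  ⟨div_pos_of_neg_of_neg hβ2 (by linarith), (div_lt_one_of_neg (by linarith)).2 (by linarith)⟩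

theorem isCESS_of_forall_Ioo {C : Set ℝ} {m' : ℝ} (hm' : m' ∈ C)
    (h : ∀ m ∈ C, m ≠ m' → ∀ ε ∈ Set.Ioo (0 : ℝ) 1,
      uA a11 a12 a21 a22 m (ε * m + (1 - ε) * m') <
        uA a11 a12 a21 a22 m' (ε * m + (1 - ε) * m')) :
    IsCESS a11 a12 a21 a22 C m' :=
  ⟨hm', fun m hm hne => ⟨1, ⟨one_pos, le_rfl⟩, h m hm hne⟩⟩

theorem isCESS_mixedEquilibrium (hs : (a11 - a21) + (a22 - a12) < 0) {C : Set ℝ}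
    (hC : mixedEquilibrium a11 a12 a21 a22 ∈ C) :
    IsCESS a11 a12 a21 a22 C (mixedEquilibrium a11 a12 a21 a22) := by
  set x := mixedEquilibrium a11 a12 a21 a22
  refine isCESS_of_forall_Ioo hC fun m _ hne ε hε => sub_pos.1 ?_
  calc 0 < -((a11 - a21) + (a22 - a12)) * ε * (m - x) ^ 2 :=
        mul_pos (mul_pos (neg_pos.2 hs) hε.1) (sq_pos_of_ne_zero (sub_ne_zero.2 hne))
    _ = _ := by rw [uA_sub_uA hs.ne]; ring

theorem isCESS_of_isGreatest_of_lt_mixedEquilibrium (hs : (a11 - a21) + (a22 - a12) < 0)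
    {C : Set ℝ} {α : ℝ} (hC : IsGreatest C α) (hα : α < mixedEquilibrium a11 a12 a21 a22) :
    IsCESS a11 a12 a21 a22 C α := by
  refine isCESS_of_forall_Ioo hC.1 fun m hm hne ε hε => sub_pos.1 ?_
  have hmα : 0 < α - m := sub_pos.2 ((hC.2 hm).lt_of_ne hne)
  have hp : ε * m + (1 - ε) * α < mixedEquilibrium a11 a12 a21 a22 := by
    nlinarith [hε.1]
  rw [uA_sub_uA hs.ne]
  exact mul_pos_of_neg_of_neg (mul_neg_of_neg_of_pos hs hmα) (sub_neg.2 hp)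

end

theorem stmt8_general (a11 a12 a21 a22 α : ℝ)
    (hβ1 : a11 - a21 < 0) (hβ2 : a22 - a12 < 0) (hα0 : 0 < α) :
    (a22 - a12) / ((a11 - a21) + (a22 - a12)) ∈ Set.Ioo (0:ℝ) 1 ∧
    ((a22 - a12) / ((a11 - a21) + (a22 - a12)) ≤ α →
      IsCESS a11 a12 a21 a22 (Set.Icc 0 α)
        ((a22 - a12) / ((a11 - a21) + (a22 - a12)))) ∧
    ((a22 - a12) / ((a11 - a21) + (a22 - a12)) > α →
      IsCESS a11 a12 a21 a22 (Set.Icc 0 α) α) := by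
  have hs : (a11 - a21) + (a22 - a12) < 0 := by linarith
  have hx := mixedEquilibrium_mem_Ioo hβ1 hβ2
  exact ⟨hx, fun hle => isCESS_mixedEquilibrium hs ⟨hx.1.le, hle⟩,
    fun hgt => isCESS_of_isGreatest_of_lt_mixedEquilibrium hs (isGreatest_Icc hα0.le) hgt⟩

/-- If β1 = a11 − a21 < 0 and β2 = a22 − a12 < 0 (Hawk–Dove) and
C = [0, α] with 0 < α < 1, then x* = β2/(β1 + β2) ∈ (0,1); if x* ≤ α then x* is a
constrained ESS, and if x* > α then α is a constrained ESS. -/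
theorem stmt8 (a11 a12 a21 a22 α : ℝ)
    (hβ1 : a11 - a21 < 0) (hβ2 : a22 - a12 < 0) (hα0 : 0 < α) (hα1 : α < 1) :
    (a22 - a12) / ((a11 - a21) + (a22 - a12)) ∈ Set.Ioo (0:ℝ) 1 ∧
    ((a22 - a12) / ((a11 - a21) + (a22 - a12)) ≤ α →
      IsCESS a11 a12 a21 a22 (Set.Icc 0 α)
        ((a22 - a12) / ((a11 - a21) + (a22 - a12)))) ∧
    ((a22 - a12) / ((a11 - a21) + (a22 - a12)) > α →
      IsCESS a11 a12 a21 a22 (Set.Icc 0 α) α) :=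
  stmt8_general a11 a12 a21 a22 α hβ1 hβ2 hα0
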